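/- Let r₀ > 0, T > 0, C > 0, k ∈ ℤ with k ≠ 0, σ = sign(k), and a, b ∈ ℂ. Let w_{k-1}, w_k, w_{k+1} : [0,T] × [r₀,∞) → ℂ be such that w_k is continuously differentiable in t and twice continuously differentiable in s, w_{k-1} and w_{k+1} are continuously differentiable in s, all three functions and their s-derivatives are bounded in absolute value by C(1+s)^{-3} uniformly in t, and |∂ₜ w_k(t,s)| ≤ C(1+s)^{-3}. Assume the Oseen equation in Fourier form: ∂ₜ w_k(t,s) = (1/s)∂ₛ(s ∂ₛ w_k) − (k²/s²) w_k − [ a ∂ₛ w_{k-1}(t,s) + b ∂ₛ w_{k+1}(t,s) − ((k−1)a/s) w_{k-1}(t,s) + ((k+1)b/s) w_{k+1}(t,s) ] for all t and s > r₀; the boundary condition r₀ ∂ₛ w_k(t,s)|_{s=r₀} + |k| w_k(t,r₀) = r₀ ( a w_{k-1}(t,r₀) + b w_{k+1}(t,r₀) ) for all t; and the moment relation ∫_{r₀}^∞ s^{-|k|} w_{k+σ}(t,s) ds = 0 for all t. Then the function t ↦ ∫_{r₀}^∞ s^{-|k|+1} w_k(t,s) ds is constant on [0,T]. -/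

import Mathlib

/-!
Multiplied by `s^(1-|k|)`, the right-hand side of the mode equation is the `s`-derivative of the
flux `Φ = s^(1-|k|) (∂ₛw_k - a w_{k-1} - b w_{k+1}) + |k| s^(-|k|) w_k`, up to the term
`s^(-|k|) ((k - |k|) a w_{k-1} - (k + |k|) b w_{k+1})`, in which only `w_{k+σ}` survives.
The Robin condition says exactly `Φ(r₀) = 0`, the decay gives `Φ → 0` at infinity, and the
moment relation kills the remaining term. Hence the weighted moment of `∂ₜw_k` vanishes, and
differentiating under the integral sign shows that the moment of `w_k` is constant in time.
-/

open MeasureTheory Set Complex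

open Filter Topology

theorem hasDerivAt_derivWithin_of_mem_nhds {E : Type*} [NormedAddCommGroup E] [NormedSpace ℝ E]
    {f : ℝ → E} {s : Set ℝ} {x : ℝ} (hf : DifferentiableOn ℝ f s) (hs : s ∈ 𝓝 x) :
    HasDerivAt f (derivWithin f s x) x :=
  (hf x (mem_of_mem_nhds hs)).hasDerivWithinAt.hasDerivAt hs

theorem eq_left_of_hasDerivAt_zero {E : Type*} [NormedAddCommGroup E] [NormedSpace ℝ E]
    [CompleteSpace E] {f : ℝ → E} {a b : ℝ} (hf : ContinuousOn f (Icc a b))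
    (hf' : ∀ x ∈ Ioo a b, HasDerivAt f 0 x) : ∀ x ∈ Icc a b, f x = f a := by
  intro x hx
  have h := intervalIntegral.integral_eq_sub_of_hasDerivAt_of_le hx.1
    (hf.mono (Icc_subset_Icc_right hx.2)) (fun y hy => hf' y ⟨hy.1, hy.2.trans_le hx.2⟩)
    intervalIntegrable_const
  rwa [intervalIntegral.integral_zero, eq_comm, sub_eq_zero] at h

theorem ContinuousOn.aestronglyMeasurable_restrict_Ioi {E : Type*} [NormedAddCommGroup E]
    {r₀ : ℝ} {f : ℝ → E} (hf : ContinuousOn f (Ici r₀)) :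
    AEStronglyMeasurable f (volume.restrict (Ioi r₀)) :=
  (hf.mono Ioi_subset_Ici_self).aestronglyMeasurable measurableSet_Ioi

theorem integrableOn_Ioi_one_add_zpow {m : ℤ} (hm : m < -1) {r₀ : ℝ} (hr₀ : 0 ≤ r₀) :
    IntegrableOn (fun s : ℝ => (1 + s) ^ m) (Ioi r₀) := by
  have h := (integrable_one_add_norm (E := ℝ) (μ := volume) (r := -m)
    (by rw [Module.finrank_self]; exact_mod_cast (by omega : (1 : ℤ) < -m))).integrableOn
    (s := Ioi r₀)
  refine h.congr_fun (fun s hs => ?_) measurableSet_Ioi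
  dsimp only
  rw [Real.norm_of_nonneg (hr₀.trans (le_of_lt hs)), neg_neg, Real.rpow_intCast]

theorem tendsto_one_add_zpow_atTop_zero {m : ℤ} (hm : m < 0) :
    Tendsto (fun s : ℝ => (1 + s) ^ m) atTop (𝓝 0) :=
  (tendsto_zpow_atTop_zero hm).comp (tendsto_atTop_add_const_left _ 1 tendsto_id)

theorem measurable_ofReal_zpow (m : ℤ) : Measurable fun s : ℝ => (s : ℂ) ^ m := by
  fun_prop

theorem continuousOn_ofReal_zpow {r₀ : ℝ} (hr₀ : 0 < r₀) (m : ℤ) :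
    ContinuousOn (fun s : ℝ => (s : ℂ) ^ m) (Ici r₀) :=
  continuous_ofReal.continuousOn.zpow₀ m fun _ hs =>
    Or.inl (ofReal_ne_zero.2 (hr₀.trans_le hs).ne')

theorem norm_ofReal_zpow_le {r s : ℝ} (hr : 0 < r) (hrs : r ≤ s) {m : ℤ} (hm : m ≤ 0) :
    ‖(s : ℂ) ^ m‖ ≤ r ^ m := by
  have hinv : ∀ x : ℝ, x ^ m = x⁻¹ ^ (-m) := fun x => by rw [inv_zpow', neg_neg]
  rw [norm_zpow, norm_real, Real.norm_of_nonneg (hr.le.trans hrs), hinv s, hinv r]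
  exact zpow_le_zpow_left₀ (neg_nonneg.2 hm) (inv_nonneg.2 (hr.le.trans hrs)) (inv_anti₀ hr hrs)

theorem norm_ofReal_zpow_mul_le {r s B : ℝ} (hr : 0 < r) (hrs : r ≤ s) {m : ℤ} (hm : m ≤ 0)
    {z : ℂ} (hz : ‖z‖ ≤ B) : ‖(s : ℂ) ^ m * z‖ ≤ r ^ m * B := by
  rw [norm_mul]
  exact mul_le_mul (norm_ofReal_zpow_le hr hrs hm) hz (norm_nonneg z) (zpow_nonneg hr.le m)

noncomputable def weightedMoment (m : ℤ) (r₀ : ℝ) (f : ℝ → ℂ) : ℂ :=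
  ∫ s in Ioi r₀, (s : ℂ) ^ m * f s

theorem weightedMoment_congr {m : ℤ} {r₀ : ℝ} {f g : ℝ → ℂ} (h : ∀ s > r₀, f s = g s) :
    weightedMoment m r₀ f = weightedMoment m r₀ g :=
  setIntegral_congr_fun measurableSet_Ioi fun s hs => by rw [h s hs]

theorem integrableOn_ofReal_zpow_mul {r₀ : ℝ} (hr₀ : 0 < r₀) {m : ℤ} (hm : m ≤ 0) {f : ℝ → ℂ}
    {g : ℝ → ℝ} (hf : AEStronglyMeasurable f (volume.restrict (Ioi r₀)))
    (hg : IntegrableOn g (Ioi r₀)) (hfg : ∀ s > r₀, ‖f s‖ ≤ g s) :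
    IntegrableOn (fun s : ℝ => (s : ℂ) ^ m * f s) (Ioi r₀) :=
  (hg.const_mul (r₀ ^ m)).mono' ((measurable_ofReal_zpow m).aestronglyMeasurable.mul hf)
    (ae_restrict_of_forall_mem measurableSet_Ioi fun s hs =>
      norm_ofReal_zpow_mul_le hr₀ (le_of_lt hs) hm (hfg s hs))

theorem continuousOn_weightedMoment {I : Set ℝ} {r₀ : ℝ} (hr₀ : 0 < r₀) {m : ℤ} (hm : m ≤ 0)
    {w : ℝ → ℝ → ℂ} {g : ℝ → ℝ}
    (hw_meas : ∀ t ∈ I, AEStronglyMeasurable (w t) (volume.restrict (Ioi r₀)))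
    (hw_cont : ∀ s > r₀, ContinuousOn (fun t => w t s) I)
    (hw_le : ∀ t ∈ I, ∀ s > r₀, ‖w t s‖ ≤ g s) (hg : IntegrableOn g (Ioi r₀)) :
    ContinuousOn (fun t => weightedMoment m r₀ (w t)) I :=
  continuousOn_of_dominated
    (fun t ht => (measurable_ofReal_zpow m).aestronglyMeasurable.mul (hw_meas t ht))
    (fun t ht => ae_restrict_of_forall_mem measurableSet_Ioi fun s hs =>
      norm_ofReal_zpow_mul_le hr₀ (le_of_lt hs) hm (hw_le t ht s hs))
    (hg.const_mul (r₀ ^ m))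
    (ae_restrict_of_forall_mem measurableSet_Ioi fun s hs => continuousOn_const.mul (hw_cont s hs))

theorem hasDerivAt_weightedMoment {a b t r₀ : ℝ} (ht : t ∈ Ioo a b) (hr₀ : 0 < r₀) {m : ℤ}
    (hm : m ≤ 0) {w : ℝ → ℝ → ℂ} {g : ℝ → ℝ}
    (hw_meas : ∀ τ ∈ Icc a b, AEStronglyMeasurable (w τ) (volume.restrict (Ioi r₀)))
    (hw_le : ∀ s > r₀, ‖w t s‖ ≤ g s)
    (hw_diff : ∀ s > r₀, DifferentiableOn ℝ (fun τ => w τ s) (Icc a b))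
    (hw'_meas : AEStronglyMeasurable (fun s => derivWithin (fun τ => w τ s) (Icc a b) t)
      (volume.restrict (Ioi r₀)))
    (hw'_le : ∀ τ ∈ Icc a b, ∀ s > r₀, ‖derivWithin (fun σ => w σ s) (Icc a b) τ‖ ≤ g s)
    (hg : IntegrableOn g (Ioi r₀)) :
    HasDerivAt (fun τ => weightedMoment m r₀ (w τ))
      (weightedMoment m r₀ fun s => derivWithin (fun τ => w τ s) (Icc a b) t) t :=
  (hasDerivAt_integral_of_dominated_loc_of_deriv_le (Ioo_mem_nhds ht.1 ht.2)
    (eventually_of_mem (Ioo_mem_nhds ht.1 ht.2) fun τ hτ =>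
      (measurable_ofReal_zpow m).aestronglyMeasurable.mul (hw_meas τ (Ioo_subset_Icc_self hτ)))
    (integrableOn_ofReal_zpow_mul hr₀ hm (hw_meas t (Ioo_subset_Icc_self ht)) hg hw_le)
    ((measurable_ofReal_zpow m).aestronglyMeasurable.mul hw'_meas)
    (ae_restrict_of_forall_mem measurableSet_Ioi fun s hs τ hτ =>
      norm_ofReal_zpow_mul_le hr₀ (le_of_lt hs) hm (hw'_le τ (Ioo_subset_Icc_self hτ) s hs))
    (hg.const_mul (r₀ ^ m))
    (ae_restrict_of_forall_mem measurableSet_Ioi fun s hs _ hτ =>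
      (hasDerivAt_derivWithin_of_mem_nhds (hw_diff s hs) (Icc_mem_nhds hτ.1 hτ.2)).const_mul
        _)).2

noncomputable def oseenRHS (k : ℤ) (a b : ℂ) (w wm wp : ℝ → ℂ) (s : ℝ) : ℂ :=
  (1 / (s : ℂ)) * deriv (fun σ : ℝ => (σ : ℂ) * deriv w σ) s - ((k : ℂ) ^ 2 / (s : ℂ) ^ 2) * w s
    - (a * deriv wm s + b * deriv wp s - (((k : ℂ) - 1) * a / (s : ℂ)) * wm s
      + (((k : ℂ) + 1) * b / (s : ℂ)) * wp s)

noncomputable def momentFlux (k : ℤ) (a b : ℂ) (w dw wm wp : ℝ → ℂ) (s : ℝ) : ℂ :=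
  (s : ℂ) ^ (-|k| + 1) * (dw s - a * wm s - b * wp s) + |k| * ((s : ℂ) ^ (-|k|) * w s)

theorem hasDerivAt_momentFlux {k : ℤ} {a b : ℂ} {w dw wm wp : ℝ → ℂ} {s : ℝ} {d2w dwm dwp : ℂ}
    (hs : s ≠ 0) (hw : ∀ᶠ σ in 𝓝 s, HasDerivAt w (dw σ) σ) (hdw : HasDerivAt dw d2w s)
    (hwm : HasDerivAt wm dwm s) (hwp : HasDerivAt wp dwp s) :
    HasDerivAt (momentFlux k a b w dw wm wp)
      ((s : ℂ) ^ (-|k| + 1) * oseenRHS k a b w wm wp s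
        - ((k - |k|) * a * ((s : ℂ) ^ (-|k|) * wm s)
          - (k + |k|) * b * ((s : ℂ) ^ (-|k|) * wp s))) s := by
  have hsC : (s : ℂ) ≠ 0 := ofReal_ne_zero.2 hs
  have hpow (m : ℤ) : HasDerivAt (fun σ : ℝ => (σ : ℂ) ^ m) (m * (s : ℂ) ^ (m - 1)) s :=
    (hasDerivAt_zpow m (s : ℂ) (Or.inl hsC)).comp_ofReal
  have hflux := ((hpow (-|k| + 1)).fun_mul
    ((hdw.fun_sub (hwm.const_mul a)).fun_sub (hwp.const_mul b))).fun_add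
    (((hpow (-|k|)).fun_mul hw.self_of_nhds).const_mul ((|k| : ℤ) : ℂ))
  have hdiv : deriv (fun σ : ℝ => (σ : ℂ) * deriv w σ) s = dw s + s * d2w := by
    have hloc : (fun σ : ℝ => (σ : ℂ) * deriv w σ) =ᶠ[𝓝 s] fun σ => σ * dw σ :=
      hw.mono fun σ h => by simp only [h.deriv]
    have hid : HasDerivAt (fun σ : ℝ => (σ : ℂ)) 1 s := by
      simpa using (hasDerivAt_id s).ofReal_comp
    rw [hloc.deriv_eq, (hid.fun_mul hdw).deriv, one_mul]
  refine hflux.congr_deriv ?_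
  unfold oseenRHS
  rw [hdiv, hwm.deriv, hwp.deriv, zpow_add_one₀ hsC, show -|k| + 1 - 1 = -|k| by ring,
    zpow_sub_one₀ hsC]
  have hk2 : (k : ℂ) ^ 2 = (|k| : ℤ) ^ 2 := by exact_mod_cast (sq_abs k).symm
  generalize (s : ℂ) ^ (-|k|) = P
  field_simp
  push_cast
  linear_combination (P * w s) * hk2

theorem aestronglyMeasurable_oseenRHS {μ : Measure ℝ} {k : ℤ} {a b : ℂ} {w wm wp : ℝ → ℂ}
    (hw : AEStronglyMeasurable w μ) (hwm : AEStronglyMeasurable wm μ)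
    (hwp : AEStronglyMeasurable wp μ) : AEStronglyMeasurable (oseenRHS k a b w wm wp) μ := by
  unfold oseenRHS
  simp only [div_eq_mul_inv]
  fun_prop

theorem continuousOn_momentFlux {r₀ : ℝ} (hr₀ : 0 < r₀) {k : ℤ} {a b : ℂ} {w dw wm wp : ℝ → ℂ}
    (hw : ContinuousOn w (Ici r₀)) (hdw : ContinuousOn dw (Ici r₀))
    (hwm : ContinuousOn wm (Ici r₀)) (hwp : ContinuousOn wp (Ici r₀)) :
    ContinuousOn (momentFlux k a b w dw wm wp) (Ici r₀) :=
  ((continuousOn_ofReal_zpow hr₀ _).mul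
    ((hdw.sub (continuousOn_const.mul hwm)).sub (continuousOn_const.mul hwp))).add
    (continuousOn_const.mul ((continuousOn_ofReal_zpow hr₀ _).mul hw))

theorem tendsto_momentFlux_atTop {k : ℤ} (hk : k ≠ 0) {a b : ℂ} {w dw wm wp : ℝ → ℂ}
    (hw : Tendsto w atTop (𝓝 0)) (hdw : Tendsto dw atTop (𝓝 0))
    (hwm : Tendsto wm atTop (𝓝 0)) (hwp : Tendsto wp atTop (𝓝 0)) :
    Tendsto (momentFlux k a b w dw wm wp) atTop (𝓝 0) := by
  have hbdd (m : ℤ) (hm : m ≤ 0) :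
      IsBoundedUnder (· ≤ ·) atTop ((‖·‖) ∘ fun s : ℝ => (s : ℂ) ^ m) :=
    isBoundedUnder_of_eventually_le (a := 1) <| (eventually_ge_atTop 1).mono fun s hs => by
      simpa using norm_ofReal_zpow_le one_pos hs hm
  have hflux_lim : Tendsto (fun s => dw s - a * wm s - b * wp s) atTop (𝓝 0) := by
    simpa using (hdw.sub (hwm.const_mul a)).sub (hwp.const_mul b)
  have h1 := isBoundedUnder_le_mul_tendsto_zero
    (hbdd (-|k| + 1) (by have := Int.one_le_abs hk; omega)) hflux_lim
  have h2 := (isBoundedUnder_le_mul_tendsto_zero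
    (hbdd (-|k|) (neg_nonpos.2 (abs_nonneg k))) hw).const_mul ((|k| : ℤ) : ℂ)
  have h := h1.add h2
  rw [mul_zero, add_zero] at h
  exact h

theorem sub_abs_mul_sub_add_abs_mul_eq_zero {k : ℤ} (hk : k ≠ 0) (a b x y : ℂ)
    (h : (if 0 < k then y else x) = 0) :
    ((k : ℂ) - (|k| : ℤ)) * a * x - ((k : ℂ) + (|k| : ℤ)) * b * y = 0 := by
  rcases hk.lt_or_gt with hneg | hpos
  · rw [if_neg hneg.not_gt] at h
    rw [h, abs_of_neg hneg]
    push_cast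
    ring
  · rw [if_pos hpos] at h
    rw [h, abs_of_pos hpos]
    ring

theorem weightedMoment_oseenRHS_eq_zero {r₀ : ℝ} (hr₀ : 0 < r₀) {k : ℤ} (hk : k ≠ 0) {a b : ℂ}
    {w wm wp : ℝ → ℂ} {g : ℝ → ℝ} (hw : ContDiffOn ℝ 2 w (Ici r₀))
    (hwm : ContDiffOn ℝ 1 wm (Ici r₀)) (hwp : ContDiffOn ℝ 1 wp (Ici r₀))
    (hg_int : IntegrableOn g (Ioi r₀)) (hg_lim : Tendsto g atTop (𝓝 0))
    (hw_le : ∀ s > r₀, ‖w s‖ ≤ g s) (hdw_le : ∀ s > r₀, ‖derivWithin w (Ici r₀) s‖ ≤ g s)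
    (hwm_le : ∀ s > r₀, ‖wm s‖ ≤ g s) (hwp_le : ∀ s > r₀, ‖wp s‖ ≤ g s)
    (hrhs_le : ∀ s > r₀, ‖oseenRHS k a b w wm wp s‖ ≤ g s)
    (robin : (r₀ : ℂ) * derivWithin w (Ici r₀) r₀ + ((|k| : ℤ) : ℂ) * w r₀ =
      (r₀ : ℂ) * (a * wm r₀ + b * wp r₀))
    (moment : weightedMoment (-|k|) r₀ (if 0 < k then wp else wm) = 0) :
    weightedMoment (-|k| + 1) r₀ (oseenRHS k a b w wm wp) = 0 := by
  have hn : -|k| + 1 ≤ 0 := by have := Int.one_le_abs hk; omega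
  set dw := derivWithin w (Ici r₀)
  set Φ := momentFlux k a b w dw wm wp
  set coupling : ℝ → ℂ := fun s => (k - |k|) * a * ((s : ℂ) ^ (-|k|) * wm s)
    - (k + |k|) * b * ((s : ℂ) ^ (-|k|) * wp s)
  have hw1 : ContDiffOn ℝ 1 w (Ici r₀) := hw.of_le one_le_two
  have hdw : ContDiffOn ℝ 1 dw (Ici r₀) := hw.derivWithin (uniqueDiffOn_Ici r₀) le_rfl
  have hD {f : ℝ → ℂ} (hf : ContDiffOn ℝ 1 f (Ici r₀)) {s : ℝ} (hs : r₀ < s) :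
      HasDerivAt f (derivWithin f (Ici r₀) s) s :=
    hasDerivAt_derivWithin_of_mem_nhds (hf.differentiableOn one_ne_zero) (Ici_mem_nhds hs)
  have hΦ' (s : ℝ) (hs : s ∈ Ioi r₀) :
      HasDerivAt Φ ((s : ℂ) ^ (-|k| + 1) * oseenRHS k a b w wm wp s - coupling s) s :=
    hasDerivAt_momentFlux (hr₀.trans hs).ne'
      (eventually_of_mem (Ioi_mem_nhds hs) fun _ hσ => hD hw1 hσ) (hD hdw hs) (hD hwm hs)
      (hD hwp hs)
  have hrhs_int := integrableOn_ofReal_zpow_mul hr₀ hn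
    (aestronglyMeasurable_oseenRHS hw1.continuousOn.aestronglyMeasurable_restrict_Ioi
      hwm.continuousOn.aestronglyMeasurable_restrict_Ioi
      hwp.continuousOn.aestronglyMeasurable_restrict_Ioi) hg_int hrhs_le
  have hwm_int := (integrableOn_ofReal_zpow_mul hr₀ (neg_nonpos.2 (abs_nonneg k))
    hwm.continuousOn.aestronglyMeasurable_restrict_Ioi hg_int hwm_le).const_mul ((k - |k|) * a)
  have hwp_int := (integrableOn_ofReal_zpow_mul hr₀ (neg_nonpos.2 (abs_nonneg k))
    hwp.continuousOn.aestronglyMeasurable_restrict_Ioi hg_int hwp_le).const_mul ((k + |k|) * b)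
  have hcoupling_int : IntegrableOn coupling (Ioi r₀) := hwm_int.sub hwp_int
  have hcoupling : ∫ s in Ioi r₀, coupling s = 0 := by
    rw [integral_sub hwm_int hwp_int, integral_const_mul, integral_const_mul]
    exact sub_abs_mul_sub_add_abs_mul_eq_zero hk a b _ _
      (by rwa [apply_ite (weightedMoment (-|k|) r₀)] at moment)
  have hΦ_r₀ : Φ r₀ = 0 := by
    simp only [Φ, momentFlux, zpow_add_one₀ (ofReal_ne_zero.2 hr₀.ne')]
    linear_combination (r₀ : ℂ) ^ (-|k|) * robin
  have hΦ_lim : Tendsto Φ atTop (𝓝 0) :=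
    have decay {f : ℝ → ℂ} (hf : ∀ s > r₀, ‖f s‖ ≤ g s) : Tendsto f atTop (𝓝 0) :=
      squeeze_zero_norm' ((eventually_gt_atTop r₀).mono hf) hg_lim
    tendsto_momentFlux_atTop hk (decay hw_le) (decay hdw_le) (decay hwm_le) (decay hwp_le)
  have hFTC : weightedMoment (-|k| + 1) r₀ (oseenRHS k a b w wm wp) - ∫ s in Ioi r₀, coupling s
      = 0 - Φ r₀ := by
    rw [weightedMoment, ← integral_sub hrhs_int hcoupling_int]
    exact integral_Ioi_of_hasDerivAt_of_tendsto (continuousOn_momentFlux hr₀ hw1.continuousOn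
      hdw.continuousOn hwm.continuousOn hwp.continuousOn r₀ self_mem_Ici) hΦ'
      (hrhs_int.sub hcoupling_int) hΦ_lim
  rwa [hcoupling, hΦ_r₀, sub_zero, sub_zero] at hFTC

theorem stmt5_general (r₀ T C : ℝ) (hr₀ : 0 < r₀)
    (k : ℤ) (hk : k ≠ 0) (a b : ℂ)
    (wkm1 wk wkp1 : ℝ → ℝ → ℂ)
    (hs_smooth : ∀ t ∈ Set.Icc (0 : ℝ) T, ContDiffOn ℝ 2 (wk t) (Set.Ici r₀))
    (ht_smooth : ∀ s ≥ r₀, ContDiffOn ℝ 1 (fun t => wk t s) (Set.Icc 0 T))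
    (hs_smooth_m : ∀ t ∈ Set.Icc (0 : ℝ) T, ContDiffOn ℝ 1 (wkm1 t) (Set.Ici r₀))
    (hs_smooth_p : ∀ t ∈ Set.Icc (0 : ℝ) T, ContDiffOn ℝ 1 (wkp1 t) (Set.Ici r₀))
    (hbound : ∀ t ∈ Set.Icc (0 : ℝ) T, ∀ s ≥ r₀,
      ‖wkm1 t s‖ ≤ C * (1 + s) ^ (-3 : ℤ) ∧
      ‖wk t s‖ ≤ C * (1 + s) ^ (-3 : ℤ) ∧
      ‖wkp1 t s‖ ≤ C * (1 + s) ^ (-3 : ℤ))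
    (hbound' : ∀ t ∈ Set.Icc (0 : ℝ) T, ∀ s ≥ r₀,
      ‖derivWithin (wkm1 t) (Set.Ici r₀) s‖ ≤ C * (1 + s) ^ (-3 : ℤ) ∧
      ‖derivWithin (wk t) (Set.Ici r₀) s‖ ≤ C * (1 + s) ^ (-3 : ℤ) ∧
      ‖derivWithin (wkp1 t) (Set.Ici r₀) s‖ ≤ C * (1 + s) ^ (-3 : ℤ))
    (hdt_bound : ∀ t ∈ Set.Icc (0 : ℝ) T, ∀ s ≥ r₀,
      ‖derivWithin (fun τ => wk τ s) (Set.Icc 0 T) t‖ ≤ C * (1 + s) ^ (-3 : ℤ))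
    (pde : ∀ t ∈ Set.Icc (0 : ℝ) T, ∀ s > r₀,
      derivWithin (fun τ => wk τ s) (Set.Icc 0 T) t =
        (1 / (s : ℂ)) * deriv (fun σ : ℝ => (σ : ℂ) * deriv (wk t) σ) s
          - ((k : ℂ) ^ 2 / (s : ℂ) ^ 2) * wk t s
          - ( a * deriv (wkm1 t) s + b * deriv (wkp1 t) s
              - (((k : ℂ) - 1) * a / (s : ℂ)) * wkm1 t s
              + (((k : ℂ) + 1) * b / (s : ℂ)) * wkp1 t s ))
    (robin : ∀ t ∈ Set.Icc (0 : ℝ) T,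
      (r₀ : ℂ) * derivWithin (wk t) (Set.Ici r₀) r₀ + ((|k| : ℤ) : ℂ) * wk t r₀ =
        (r₀ : ℂ) * (a * wkm1 t r₀ + b * wkp1 t r₀))
    (moment : ∀ t ∈ Set.Icc (0 : ℝ) T,
      (∫ s in Set.Ioi r₀,
        (s : ℂ) ^ (-(|k| : ℤ)) * (if 0 < k then wkp1 else wkm1) t s) = 0) :
    ∀ t ∈ Set.Icc (0 : ℝ) T,
      (∫ s in Set.Ioi r₀, (s : ℂ) ^ (-(|k| : ℤ) + 1) * wk t s) =
      (∫ s in Set.Ioi r₀, (s : ℂ) ^ (-(|k| : ℤ) + 1) * wk 0 s) := by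
  set g : ℝ → ℝ := fun s => C * (1 + s) ^ (-3 : ℤ)
  have hg_int : IntegrableOn g (Ioi r₀) :=
    (integrableOn_Ioi_one_add_zpow (by norm_num) hr₀.le).const_mul C
  have hg_lim : Tendsto g atTop (𝓝 0) := by
    simpa only [mul_zero] using
      (tendsto_one_add_zpow_atTop_zero (by norm_num : (-3 : ℤ) < 0)).const_mul C
  have hm : -|k| + 1 ≤ 0 := by have := Int.one_le_abs hk; omega
  have hmeas (τ) (hτ : τ ∈ Icc 0 T) : AEStronglyMeasurable (wk τ) (volume.restrict (Ioi r₀)) :=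
    (hs_smooth τ hτ).continuousOn.aestronglyMeasurable_restrict_Ioi
  have hdt (τ) (hτ : τ ∈ Icc 0 T) : ∀ s > r₀, derivWithin (fun σ => wk σ s) (Icc 0 T) τ =
      oseenRHS k a b (wk τ) (wkm1 τ) (wkp1 τ) s := pde τ hτ
  have hzero (τ) (hτ : τ ∈ Icc 0 T) :
      weightedMoment (-|k| + 1) r₀ (fun s => derivWithin (fun σ => wk σ s) (Icc 0 T) τ) = 0 := by
    rw [weightedMoment_congr (hdt τ hτ)]
    exact weightedMoment_oseenRHS_eq_zero hr₀ hk (hs_smooth τ hτ) (hs_smooth_m τ hτ)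
      (hs_smooth_p τ hτ) hg_int hg_lim (fun s hs => (hbound τ hτ s hs.le).2.1)
      (fun s hs => (hbound' τ hτ s hs.le).2.1) (fun s hs => (hbound τ hτ s hs.le).1)
      (fun s hs => (hbound τ hτ s hs.le).2.2) (fun s hs => hdt τ hτ s hs ▸ hdt_bound τ hτ s hs.le)
      (robin τ hτ) (by rw [← moment τ hτ]; split_ifs <;> rfl)
  have hderiv (τ) (hτ : τ ∈ Ioo 0 T) := hasDerivAt_weightedMoment hτ hr₀ hm hmeas
    (fun s hs => (hbound τ (Ioo_subset_Icc_self hτ) s hs.le).2.1)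
    (fun s hs => (ht_smooth s hs.le).differentiableOn one_ne_zero)
    ((aestronglyMeasurable_oseenRHS (hmeas τ (Ioo_subset_Icc_self hτ))
      (hs_smooth_m τ (Ioo_subset_Icc_self hτ)).continuousOn.aestronglyMeasurable_restrict_Ioi
      (hs_smooth_p τ (Ioo_subset_Icc_self hτ)).continuousOn.aestronglyMeasurable_restrict_Ioi).congr
      (ae_restrict_of_forall_mem measurableSet_Ioi fun s hs =>
        (hdt τ (Ioo_subset_Icc_self hτ) s hs).symm))
    (fun σ hσ s hs => hdt_bound σ hσ s hs.le) hg_int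
  exact eq_left_of_hasDerivAt_zero
    (continuousOn_weightedMoment hr₀ hm hmeas (fun s hs => (ht_smooth s hs.le).continuousOn)
      (fun τ hτ s hs => (hbound τ hτ s hs.le).2.1) hg_int)
    (fun τ hτ => hzero τ (Ioo_subset_Icc_self hτ) ▸ hderiv τ hτ)

/-- invariance of the vorticity moment under the Oseen flow, per Fourier
mode. `wk`, `wkm1`, `wkp1` play the roles of the Fourier coefficients `w_k`, `w_{k-1}`,
`w_{k+1}` of the vorticity; `a = v_{∞,r,1}`, `b = v_{∞,r,-1}`. Under the Oseen equation,
the Robin-type boundary condition with right-hand side `r₀(a w_{k-1}(r₀) + b w_{k+1}(r₀))`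
and the moment relation `∫ s^{-|k|} w_{k+σ} ds = 0`, the weighted moment
`t ↦ ∫_{r₀}^∞ s^{-|k|+1} w_k(t,s) ds` is constant on `[0,T]`. -/
theorem stmt5 (r₀ T C : ℝ) (hr₀ : 0 < r₀) (hT : 0 < T) (hC : 0 < C)
    (k : ℤ) (hk : k ≠ 0) (a b : ℂ)
    (wkm1 wk wkp1 : ℝ → ℝ → ℂ)
    (hs_smooth : ∀ t ∈ Set.Icc (0 : ℝ) T, ContDiffOn ℝ 2 (wk t) (Set.Ici r₀))
    (ht_smooth : ∀ s ≥ r₀, ContDiffOn ℝ 1 (fun t => wk t s) (Set.Icc 0 T))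
    (hs_smooth_m : ∀ t ∈ Set.Icc (0 : ℝ) T, ContDiffOn ℝ 1 (wkm1 t) (Set.Ici r₀))
    (hs_smooth_p : ∀ t ∈ Set.Icc (0 : ℝ) T, ContDiffOn ℝ 1 (wkp1 t) (Set.Ici r₀))
    (hbound : ∀ t ∈ Set.Icc (0 : ℝ) T, ∀ s ≥ r₀,
      ‖wkm1 t s‖ ≤ C * (1 + s) ^ (-3 : ℤ) ∧
      ‖wk t s‖ ≤ C * (1 + s) ^ (-3 : ℤ) ∧
      ‖wkp1 t s‖ ≤ C * (1 + s) ^ (-3 : ℤ))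
    (hbound' : ∀ t ∈ Set.Icc (0 : ℝ) T, ∀ s ≥ r₀,
      ‖derivWithin (wkm1 t) (Set.Ici r₀) s‖ ≤ C * (1 + s) ^ (-3 : ℤ) ∧
      ‖derivWithin (wk t) (Set.Ici r₀) s‖ ≤ C * (1 + s) ^ (-3 : ℤ) ∧
      ‖derivWithin (wkp1 t) (Set.Ici r₀) s‖ ≤ C * (1 + s) ^ (-3 : ℤ))
    (hdt_bound : ∀ t ∈ Set.Icc (0 : ℝ) T, ∀ s ≥ r₀,
      ‖derivWithin (fun τ => wk τ s) (Set.Icc 0 T) t‖ ≤ C * (1 + s) ^ (-3 : ℤ))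
    (pde : ∀ t ∈ Set.Icc (0 : ℝ) T, ∀ s > r₀,
      derivWithin (fun τ => wk τ s) (Set.Icc 0 T) t =
        (1 / (s : ℂ)) * deriv (fun σ : ℝ => (σ : ℂ) * deriv (wk t) σ) s
          - ((k : ℂ) ^ 2 / (s : ℂ) ^ 2) * wk t s
          - ( a * deriv (wkm1 t) s + b * deriv (wkp1 t) s
              - (((k : ℂ) - 1) * a / (s : ℂ)) * wkm1 t s
              + (((k : ℂ) + 1) * b / (s : ℂ)) * wkp1 t s ))
    (robin : ∀ t ∈ Set.Icc (0 : ℝ) T,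
      (r₀ : ℂ) * derivWithin (wk t) (Set.Ici r₀) r₀ + ((|k| : ℤ) : ℂ) * wk t r₀ =
        (r₀ : ℂ) * (a * wkm1 t r₀ + b * wkp1 t r₀))
    (moment : ∀ t ∈ Set.Icc (0 : ℝ) T,
      (∫ s in Set.Ioi r₀,
        (s : ℂ) ^ (-(|k| : ℤ)) * (if 0 < k then wkp1 else wkm1) t s) = 0) :
    ∀ t ∈ Set.Icc (0 : ℝ) T,
      (∫ s in Set.Ioi r₀, (s : ℂ) ^ (-(|k| : ℤ) + 1) * wk t s) =
      (∫ s in Set.Ioi r₀, (s : ℂ) ^ (-(|k| : ℤ) + 1) * wk 0 s) :=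
  stmt5_general r₀ T C hr₀ k hk a b wkm1 wk wkp1 hs_smooth ht_smooth hs_smooth_m hs_smooth_p hbound
    hbound' hdt_bound pde robin moment
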